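/- arXiv:1208.4312 — 2 statements merged into one kernel-verified Lean document; each statement's English description precedes it below -/
import Mathlib

section
/- Fix integers n ≥ 2 and k ≥ 3 and a constant c > 0; set γ_k := 1/2 − 1/k and Z₁(u) := c u^{−2}(1 − u²)^{1+2γ_k}. Then there exists a constant ĉ such that every solution Z₂ : (0,1) → ℝ of the linear ODE (1/2)(u^{−1} − u) Z₂′(u) + (u^{−2} + 4γ_k) Z₂(u) = −Q_u[Z₁](u)/(2(n−1)) satisfies Z₂(u) = (ĉ + o(1))(1 − u)^{4γ_k} as u ↗ 1; moreover every such solution satisfies Z₂(u) = O(u^{−4}) as u ↘ 0. -/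
open Topology Filter Asymptotics Set

noncomputable def gam (k : ℕ) : ℝ := 1/2 - 1/(k:ℝ)

noncomputable def Qop (n : ℕ) (Z : ℝ → ℝ) (u : ℝ) : ℝ :=
  Z u * deriv (deriv Z) u - (1/2) * (deriv Z u)^2
    - Z u * deriv Z u / u - 2 * ((n:ℝ) - 1) * (Z u)^2 / u^2

/-!
Both `Z₁ = c u⁻²(1-u²)^(1+2γ)` and the homogeneous solution `E = u⁻²(1-u²)^(1+4γ)` are
profiles `c u⁻²(1-u²)^s`, whose logarithmic derivative is `ℓ = -2/u - 2su/(1-u²)`. Hence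
`Q_u[Z₁] = Z₁²(ℓ²/2 + ℓ' - ℓ/u - 2(n-1)/u²)` is `Z₁²` times a rational function, and
`Z₁² = c²(1-u²)E/u²`. Variation of constants then makes `(Z₂/E)'` rational, with the explicit
primitive `F = a/u² + b(log u - log(1-u²)/2) + d/(1-u²)`, so `Z₂ = (F + C)E`. As `u ↗ 1` only
`d/(1-u²)` survives against `E ~ 2^(4γ)(1-u)^(1+4γ)`, so `ĉ = 2^(4γ) d` does not depend on the
integration constant `C`; as `u ↘ 0`, `(F + C)E ~ a u⁻⁴`.
-/

open Real

lemma Qop_eq_of_hasDerivAt_eq_mul {n : ℕ} {Z ℓ : ℝ → ℝ} {u ℓ' : ℝ}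
    (hZ : ∀ᶠ x in 𝓝 u, HasDerivAt Z (Z x * ℓ x) x) (hℓ : HasDerivAt ℓ ℓ' u) :
    Qop n Z u = Z u ^ 2 * (ℓ u ^ 2 / 2 + ℓ' - ℓ u / u - 2 * ((n:ℝ) - 1) / u ^ 2) := by
  have hZ' : deriv Z =ᶠ[𝓝 u] fun x => Z x * ℓ x := hZ.mono fun x hx => hx.deriv
  have hZ'' : deriv (deriv Z) u = Z u * ℓ u * ℓ u + Z u * ℓ' := by
    rw [hZ'.deriv_eq]
    exact (hZ.self_of_nhds.mul hℓ).deriv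
  unfold Qop
  rw [hZ'', hZ'.eq_of_nhds]
  ring

lemma one_sub_sq_pos {x : ℝ} (hx : x ∈ Ioo (0:ℝ) 1) : 0 < 1 - x ^ 2 := by
  nlinarith [hx.1, hx.2]

lemma rpow_neg_two {x : ℝ} (hx : 0 ≤ x) : x ^ (-2:ℝ) = (x ^ 2)⁻¹ := by
  rw [rpow_neg hx, rpow_two]

lemma hasDerivAt_rpow_const_eq_mul (p : ℝ) {x : ℝ} (hx : x ≠ 0) :
    HasDerivAt (fun y => y ^ p) (x ^ p * (p / x)) x := by
  convert hasDerivAt_rpow_const (p := p) (Or.inl hx) using 1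
  rw [rpow_sub_one hx]
  ring

lemma hasDerivAt_one_sub_sq (x : ℝ) : HasDerivAt (fun y : ℝ => 1 - y ^ 2) (-(2 * x)) x := by
  simpa using (hasDerivAt_pow 2 x).const_sub 1

lemma hasDerivAt_one_sub_sq_rpow (s : ℝ) {x : ℝ} (hx : 1 - x ^ 2 ≠ 0) :
    HasDerivAt (fun y => (1 - y ^ 2) ^ s) ((1 - x ^ 2) ^ s * (-2 * s * x / (1 - x ^ 2))) x := by
  convert (hasDerivAt_one_sub_sq x).rpow_const (p := s) (Or.inl hx) using 1
  rw [rpow_sub_one hx]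
  ring

noncomputable def profile (c s x : ℝ) : ℝ := c * x ^ (-2:ℝ) * (1 - x ^ 2) ^ s

noncomputable def profileLogDeriv (s x : ℝ) : ℝ := -2 / x - 2 * s * x / (1 - x ^ 2)

lemma hasDerivAt_profile (c s : ℝ) {x : ℝ} (hx : x ≠ 0) (hx' : 1 - x ^ 2 ≠ 0) :
    HasDerivAt (profile c s) (profile c s x * profileLogDeriv s x) x := by
  have h := ((hasDerivAt_rpow_const_eq_mul (-2) hx).const_mul c).mul
    (hasDerivAt_one_sub_sq_rpow s hx')
  exact h.congr_deriv (by unfold profile profileLogDeriv; ring)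

lemma hasDerivAt_profileLogDeriv (s : ℝ) {x : ℝ} (hx : x ≠ 0) (hx' : 1 - x ^ 2 ≠ 0) :
    HasDerivAt (profileLogDeriv s) (2 / x ^ 2 - 2 * s * (1 + x ^ 2) / (1 - x ^ 2) ^ 2) x := by
  have h := ((hasDerivAt_const x (-2 : ℝ)).fun_div (hasDerivAt_id' x) hx).fun_sub
    (((hasDerivAt_id' x).const_mul (2 * s)).fun_div (hasDerivAt_one_sub_sq x) hx')
  exact h.congr_deriv (by field_simp; ring)

lemma Qop_profile (n : ℕ) (c s : ℝ) {u : ℝ} (hu : u ∈ Ioo (0:ℝ) 1) :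
    Qop n (profile c s) u = profile c s u ^ 2 * ((8 - 2 * n) / u ^ 2 + 4 * s / (1 - u ^ 2)
      + 2 * s * (s - 2) * u ^ 2 / (1 - u ^ 2) ^ 2) := by
  have hpos : ∀ x ∈ Ioo (0:ℝ) 1, x ≠ 0 ∧ 1 - x ^ 2 ≠ 0 := fun x hx =>
    ⟨hx.1.ne', (one_sub_sq_pos hx).ne'⟩
  rw [Qop_eq_of_hasDerivAt_eq_mul (ℓ := profileLogDeriv s)
    (eventually_of_mem (Ioo_mem_nhds hu.1 hu.2) fun x hx =>
      hasDerivAt_profile c s (hpos x hx).1 (hpos x hx).2)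
    (hasDerivAt_profileLogDeriv s (hpos u hu).1 (hpos u hu).2)]
  obtain ⟨hu0, hv⟩ := hpos u hu
  unfold profileLogDeriv
  field_simp
  ring

lemma profile_sq (c s : ℝ) {u : ℝ} (hu : u ∈ Ioo (0:ℝ) 1) :
    profile c s u ^ 2 = c ^ 2 * (1 - u ^ 2) * profile 1 (2 * s - 1) u / u ^ 2 := by
  have hv := one_sub_sq_pos hu
  unfold profile
  rw [rpow_sub_one hv.ne', mul_comm 2 s, rpow_mul hv.le, rpow_two, rpow_neg_two hu.1.le]
  field_simp

lemma profile_pos {c : ℝ} (s : ℝ) (hc : 0 < c) {u : ℝ} (hu : u ∈ Ioo (0:ℝ) 1) :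
    0 < profile c s u := by
  have hu0 : 0 < u := hu.1
  have hv := one_sub_sq_pos hu
  unfold profile
  positivity

theorem exists_eq_mul_profile_of_ode {γ : ℝ} {Z Z' R F : ℝ → ℝ}
    (hZ : ∀ u ∈ Ioo (0:ℝ) 1, HasDerivAt Z (Z' u) u)
    (hode : ∀ u ∈ Ioo (0:ℝ) 1, (1/2) * (u⁻¹ - u) * Z' u + (u ^ (-2:ℝ) + 4 * γ) * Z u = R u)
    (hF : ∀ u ∈ Ioo (0:ℝ) 1,
      HasDerivAt F (2 * u * R u / ((1 - u ^ 2) * profile 1 (1 + 4 * γ) u)) u) :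
    ∃ C, ∀ u ∈ Ioo (0:ℝ) 1, Z u = (F u + C) * profile 1 (1 + 4 * γ) u := by
  have hquot : ∀ u ∈ Ioo (0:ℝ) 1, HasDerivAt (fun x => Z x / profile 1 (1 + 4 * γ) x)
      (2 * u * R u / ((1 - u ^ 2) * profile 1 (1 + 4 * γ) u)) u := by
    intro u hu
    have hu0 : u ≠ 0 := hu.1.ne'
    have hv := (one_sub_sq_pos hu).ne'
    have hE := (profile_pos (1 + 4 * γ) one_pos hu).ne'
    refine ((hZ u hu).div (hasDerivAt_profile 1 _ hu0 hv) hE).congr_deriv ?_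
    rw [← hode u hu, rpow_neg_two hu.1.le]
    unfold profileLogDeriv
    field_simp
    ring
  obtain ⟨C, hC⟩ := isOpen_Ioo.exists_eq_add_of_deriv_eq isPreconnected_Ioo
    (fun u hu => (hquot u hu).differentiableAt.differentiableWithinAt)
    (fun u hu => (hF u hu).differentiableAt.differentiableWithinAt)
    (fun u hu => (hquot u hu).deriv.trans (hF u hu).deriv.symm)
  refine ⟨C, fun u hu => ?_⟩
  rw [← div_mul_cancel₀ (Z u) (profile_pos (1 + 4 * γ) one_pos hu).ne']
  exact congrArg (· * _) (hC hu)

noncomputable def forcingPrimitive (a b d u : ℝ) : ℝ :=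
  a / u ^ 2 + b * (log u - log (1 - u ^ 2) / 2) + d / (1 - u ^ 2)

lemma hasDerivAt_forcingPrimitive (a b d : ℝ) {u : ℝ} (hu : u ≠ 0) (hv : 1 - u ^ 2 ≠ 0) :
    HasDerivAt (forcingPrimitive a b d)
      (-2 * a / u ^ 3 + b / (u * (1 - u ^ 2)) + 2 * d * u / (1 - u ^ 2) ^ 2) u := by
  have h := (((hasDerivAt_const u a).fun_div (hasDerivAt_pow 2 u) (pow_ne_zero 2 hu)).fun_add
    (((hasDerivAt_log hu).sub (((hasDerivAt_one_sub_sq u).log hv).div_const 2)).const_mul b)).fun_add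
    ((hasDerivAt_const u d).fun_div (hasDerivAt_one_sub_sq u) hv)
  exact h.congr_deriv (by field_simp; ring)

lemma hasDerivAt_forcingPrimitive_Qop (n : ℕ) (γ c : ℝ) {u : ℝ} (hu : u ∈ Ioo (0:ℝ) 1) :
    HasDerivAt
      (forcingPrimitive (c ^ 2 * (4 - n) / (n - 1)) (-4 * c ^ 2 * (1 + 2 * γ) / (n - 1))
        (-c ^ 2 * (1 + 2 * γ) * (2 * γ - 1) / (n - 1)))
      (2 * u * (-Qop n (profile c (1 + 2 * γ)) u / (2 * ((n:ℝ) - 1)))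
        / ((1 - u ^ 2) * profile 1 (1 + 4 * γ) u)) u := by
  have hu0 : u ≠ 0 := hu.1.ne'
  have hv := (one_sub_sq_pos hu).ne'
  have hE := (profile_pos (1 + 4 * γ) one_pos hu).ne'
  refine (hasDerivAt_forcingPrimitive _ _ _ hu0 hv).congr_deriv ?_
  rw [Qop_profile n c _ hu, profile_sq c _ hu, show 2 * (1 + 2 * γ) - 1 = 1 + 4 * γ by ring]
  field_simp
  ring

section Asymptotics

variable {α : Type*} {l : Filter α} {f g Φ : α → ℝ} {L : ℝ}

lemma isLittleO_sub_const_mul_of_eventuallyEq_mul (hf : ∀ᶠ x in l, f x = Φ x * g x)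
    (hΦ : Tendsto Φ l (𝓝 L)) : (fun x => f x - L * g x) =o[l] g := by
  have h : (fun x => Φ x - L) =o[l] (fun _ => (1:ℝ)) :=
    (isLittleO_one_iff ℝ).mpr (tendsto_sub_nhds_zero_iff.mpr hΦ)
  refine (h.mul_isBigO (isBigO_refl g l)).congr' ?_ (by simp)
  filter_upwards [hf] with x hx
  rw [hx]
  ring

lemma isBigO_of_eventuallyEq_mul (hf : ∀ᶠ x in l, f x = Φ x * g x)
    (hΦ : Tendsto Φ l (𝓝 L)) : f =O[l] g :=
  ((hΦ.isBigO_one ℝ).mul (isBigO_refl g l)).congr' (hf.mono fun _ hx => hx.symm) (by simp)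

end Asymptotics

section SolutionAsymptotics

variable {p a b d C : ℝ} {Z : ℝ → ℝ}

lemma isLittleO_sub_of_eq_mul_profile
    (hZ : ∀ u ∈ Ioo (0:ℝ) 1, Z u = (forcingPrimitive a b d u + C) * profile 1 (1 + p) u) :
    (fun u => Z u - d * 2 ^ p * (1 - u) ^ p) =o[𝓝[<] (1:ℝ)] fun u => (1 - u) ^ p := by
  -- `negMulLog x = -x log x` is continuous at `0`, which absorbs the logarithmic singularity.
  set Φ : ℝ → ℝ := fun u => (a * (1 - u ^ 2) / u ^ 2 + b * ((1 - u ^ 2) * log u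
    + negMulLog (1 - u ^ 2) / 2) + d + C * (1 - u ^ 2)) * ((1 + u) ^ p / u ^ 2)
  have hΦ : ContinuousAt Φ 1 := by
    have : ContinuousAt log 1 := continuousAt_log one_ne_zero
    fun_prop (disch := norm_num)
  have hΦ1 : Φ 1 = d * 2 ^ p := by norm_num [Φ]
  refine isLittleO_sub_const_mul_of_eventuallyEq_mul (Φ := Φ) ?_
    (hΦ1 ▸ hΦ.tendsto.mono_left nhdsWithin_le_nhds)
  filter_upwards [Ioo_mem_nhdsLT (zero_lt_one' ℝ)] with u hu
  have hu0 : 0 < u := hu.1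
  have h1u : 0 < 1 - u := by linarith [hu.2]
  have h1u' : 0 < 1 + u := by linarith [hu.1]
  rw [hZ u hu]
  simp only [Φ, profile, forcingPrimitive, negMulLog]
  rw [rpow_neg_two hu0.le, show 1 - u ^ 2 = (1 - u) * (1 + u) by ring,
    rpow_add (by positivity), rpow_one, mul_rpow h1u.le h1u'.le, log_mul h1u.ne' h1u'.ne']
  field_simp
  ring

lemma isBigO_of_eq_mul_profile
    (hZ : ∀ u ∈ Ioo (0:ℝ) 1, Z u = (forcingPrimitive a b d u + C) * profile 1 (1 + p) u) :
    Z =O[𝓝[>] (0:ℝ)] fun u => u ^ (-4:ℝ) := by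
  set Φ : ℝ → ℝ := fun u => (a + b * (-u * negMulLog u - u ^ 2 * log (1 - u ^ 2) / 2)
    + d * u ^ 2 / (1 - u ^ 2) + C * u ^ 2) * (1 - u ^ 2) ^ (1 + p)
  have hΦ : ContinuousAt Φ 0 := by
    have : ContinuousAt log 1 := continuousAt_log one_ne_zero
    fun_prop (disch := norm_num)
  refine isBigO_of_eventuallyEq_mul (Φ := Φ) ?_ (hΦ.tendsto.mono_left nhdsWithin_le_nhds)
  filter_upwards [Ioo_mem_nhdsGT (zero_lt_one' ℝ)] with u hu
  have hu0 : 0 < u := hu.1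
  have hv := one_sub_sq_pos hu
  rw [hZ u hu]
  simp only [Φ, profile, forcingPrimitive, negMulLog]
  rw [rpow_neg_two hu0.le, rpow_neg hu0.le, show (4:ℝ) = (4:ℕ) by norm_num, rpow_natCast]
  field_simp

end SolutionAsymptotics

theorem stmt4_general (n k : ℕ) (c : ℝ) :
    ∃ cHat : ℝ, ∀ Z₂ Z₂' : ℝ → ℝ,
      (∀ u ∈ Set.Ioo (0:ℝ) 1, HasDerivAt Z₂ (Z₂' u) u) →
      (∀ u ∈ Set.Ioo (0:ℝ) 1,
        (1/2) * (u⁻¹ - u) * Z₂' u + (u ^ (-2:ℝ) + 4 * gam k) * Z₂ u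
          = -(Qop n (fun x => c * x ^ (-2:ℝ) * (1 - x^2) ^ (1 + 2 * gam k)) u)
              / (2 * ((n:ℝ) - 1))) →
      ((fun u => Z₂ u - cHat * (1 - u) ^ (4 * gam k)) =o[𝓝[<] (1:ℝ)]
          fun u => (1 - u) ^ (4 * gam k)) ∧
      ((fun u => Z₂ u) =O[𝓝[>] (0:ℝ)] fun u => u ^ (-4:ℝ)) := by
  refine ⟨-c ^ 2 * (1 + 2 * gam k) * (2 * gam k - 1) / (n - 1) * 2 ^ (4 * gam k),
    fun Z₂ Z₂' hZ₂ hode => ?_⟩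
  obtain ⟨C, hC⟩ := exists_eq_mul_profile_of_ode hZ₂ hode
    (fun u hu => hasDerivAt_forcingPrimitive_Qop n (gam k) c hu)
  exact ⟨isLittleO_sub_of_eq_mul_profile hC, isBigO_of_eq_mul_profile hC⟩

/-- asymptotics of solutions `Z₂` of
`(1/2)(u⁻¹ - u) Z₂' + (u⁻² + 4γ_k) Z₂ = -Q_u[Z₁]/(2(n-1))`,
where `Z₁(u) = c u⁻² (1-u²)^{1+2γ_k}`: there is a single constant `cHat` so that every
solution satisfies `Z₂(u) = (cHat + o(1))(1-u)^{4γ_k}` as `u ↗ 1`, and every solution is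
`O(u⁻⁴)` as `u ↘ 0`. -/
theorem stmt4 (n k : ℕ) (hn : 2 ≤ n) (hk : 3 ≤ k) (c : ℝ) (hc : 0 < c) :
    ∃ cHat : ℝ, ∀ Z₂ Z₂' : ℝ → ℝ,
      (∀ u ∈ Set.Ioo (0:ℝ) 1, HasDerivAt Z₂ (Z₂' u) u) →
      (∀ u ∈ Set.Ioo (0:ℝ) 1,
        (1/2) * (u⁻¹ - u) * Z₂' u + (u ^ (-2:ℝ) + 4 * gam k) * Z₂ u
          = -(Qop n (fun x => c * x ^ (-2:ℝ) * (1 - x^2) ^ (1 + 2 * gam k)) u)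
              / (2 * ((n:ℝ) - 1))) →
      ((fun u => Z₂ u - cHat * (1 - u) ^ (4 * gam k)) =o[𝓝[<] (1:ℝ)]
          fun u => (1 - u) ^ (4 * gam k)) ∧
      ((fun u => Z₂ u) =O[𝓝[>] (0:ℝ)] fun u => u ^ (-4:ℝ)) :=
  stmt4_general n k c
end

section
/- Fix an integer k ≥ 3 and constants A⁻, A⁺, B, P > 0; set γ_k := 1/2 − 1/k and μ_k := k/2 − 1. There exist δ₁ > 0 and a time τ₈, depending only on k, A⁺, B, P, such that for every τ ≥ τ₈ the following holds. Let w : [2P/5, δ₁ e^{γ_k τ}] → (0,∞) be C¹; suppose w(σ₀) = B for some σ₀ ∈ (2P/5, 3P/5); suppose w(σ) > B for all σ ∈ (3P/5, δ₁ e^{γ_k τ}]; and suppose √(A⁻)/k ≤ (w^{1/k})′(σ) ≤ √(A⁺)/k at every σ ∈ [2P/5, δ₁ e^{γ_k τ}] at which B ≤ w(σ) ≤ (1/2) e^{μ_k τ}. Then B ≤ w(σ) ≤ (1/2) e^{μ_k τ}, and consequently √(A⁻)/k ≤ (w^{1/k})′(σ) ≤ √(A⁺)/k, for every σ ∈ [3P/5,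 δ₁ e^{γ_k τ}]. -/
/-!
Choose `δ₁` so that the slope bound `√A⁺/k` lets `w^{1/k}` rise by at most half of
`(e^{μ_k τ}/2)^{1/k} = (1/2)^{1/k} e^{γ_k τ}` over an interval of length `δ₁ e^{γ_k τ}`.
If `w` exceeded `e^{μ_k τ}/2` somewhere, then between the last time `w ≤ B` and the first
time `w ≥ e^{μ_k τ}/2` the slope bound holds throughout, so `w^{1/k}` would have to climb
from `B^{1/k}`, which is below half of that height for large `τ`, to the full height.
The lower bound `B ≤ w` at `3P/5` is continuity.
-/

open Topology Filter Asymptotics Set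

/-- `μ_k = k/2 - 1`. -/
noncomputable def mu (k : ℕ) : ℝ := (k:ℝ)/2 - 1

/-- `c` is the first time with `U ≤ f`, and `d` the last time before `c` with `f ≤ L`. -/
theorem ContinuousOn.exists_crossing {α β : Type*} [ConditionallyCompleteLinearOrder α]
    [TopologicalSpace α] [OrderTopology α] [LinearOrder β] [TopologicalSpace β]
    [OrderClosedTopology β] {f : α → β} {a b : α} {L U : β} (hf : ContinuousOn f (Icc a b))
    (hab : a ≤ b) (ha : f a ≤ L) (hb : U ≤ f b) :
    ∃ d c, a ≤ d ∧ d ≤ c ∧ c ≤ b ∧ f d ≤ L ∧ U ≤ f c ∧ ∀ x ∈ Ioo d c, f x ∈ Ioo L U := by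
  set S := {x ∈ Icc a b | U ≤ f x}
  have hSbdd : BddBelow S := bddBelow_Icc.mono fun _ hx => hx.1
  have hcS : sInf S ∈ S :=
    (hf.preimage_isClosed_of_isClosed isClosed_Icc isClosed_Ici).csInf_mem
      ⟨b, ⟨hab, le_rfl⟩, hb⟩ hSbdd
  set c := sInf S
  set T := {x ∈ Icc a c | f x ≤ L}
  have hTbdd : BddAbove T := bddAbove_Icc.mono fun _ hx => hx.1
  have hdT : sSup T ∈ T :=
    ((hf.mono (Icc_subset_Icc_right hcS.1.2)).preimage_isClosed_of_isClosed isClosed_Icc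
      isClosed_Iic).csSup_mem ⟨a, ⟨le_rfl, hcS.1.1⟩, ha⟩ hTbdd
  refine ⟨sSup T, c, hdT.1.1, hdT.1.2, hcS.1.2, hdT.2, hcS.2, fun x hx => ⟨?_, ?_⟩⟩
  · by_contra! hxL
    exact hx.1.not_ge (le_csSup hTbdd ⟨⟨hdT.1.1.trans hx.1.le, hx.2.le⟩, hxL⟩)
  · by_contra! hxU
    exact hx.2.not_ge (csInf_le hSbdd ⟨⟨hdT.1.1.trans hx.1.le, hx.2.le.trans hcS.1.2⟩, hxU⟩)

theorem ContinuousOn.le_of_forall_lt_on_Ioc {α β : Type*} [LinearOrder α] [TopologicalSpace α]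
    [OrderTopology α] [DenselyOrdered α] [LinearOrder β] [TopologicalSpace β]
    [OrderClosedTopology β] {f : α → β} {a b : α} {B : β} (hf : ContinuousOn f (Icc a b))
    (hab : a < b) (hB : ∀ x ∈ Ioc a b, B < f x) : ∀ x ∈ Icc a b, B ≤ f x := by
  intro x hx
  rw [← closure_Ioc hab.ne] at hx
  exact continuousWithinAt_const.closure_le hx
    ((hf x (closure_Ioc hab.ne ▸ hx)).mono Ioc_subset_Icc_self) fun y hy => (hB y hy).le

theorem image_lt_of_deriv_le_between {f : ℝ → ℝ} {a b L U C : ℝ}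
    (hf : ContinuousOn f (Icc a b)) (hf' : DifferentiableOn ℝ f (Ioo a b)) (ha : f a ≤ L)
    (hC : 0 ≤ C) (hgap : L + C * (b - a) < U)
    (hderiv : ∀ x ∈ Ioo a b, f x ∈ Ioo L U → deriv f x ≤ C) :
    ∀ x ∈ Icc a b, f x < U := by
  intro x hx
  by_contra! hUx
  obtain ⟨d, c, had, hdc, hcx, hd, hc, hband⟩ :=
    (hf.mono (Icc_subset_Icc_right hx.2)).exists_crossing hx.1 ha hUx
  have hsub : Ioo d c ⊆ Ioo a b := Ioo_subset_Ioo had (hcx.trans hx.2)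
  have hslope : f c - f d ≤ C * (c - d) := by
    refine (convex_Icc d c).image_sub_le_mul_sub_of_deriv_le
      (hf.mono (Icc_subset_Icc had (hcx.trans hx.2))) ?_ ?_ d ⟨le_rfl, hdc⟩ c ⟨hdc, le_rfl⟩ hdc
    · rw [interior_Icc]; exact hf'.mono hsub
    · rw [interior_Icc]; exact fun y hy => hderiv y (hsub hy) (hband y hy)
  have hlen : C * (c - d) ≤ C * (b - a) := mul_le_mul_of_nonneg_left (by linarith [hx.2]) hC
  linarith

theorem rpow_lt_of_deriv_rpow_le {w : ℝ → ℝ} {a b B M C r : ℝ} (hr : 0 < r) (hB : 0 ≤ B)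
    (hM : 0 ≤ M) (hw0 : ∀ x ∈ Icc a b, 0 < w x) (hw : ContinuousOn w (Icc a b))
    (hw' : DifferentiableOn ℝ w (Ioo a b)) (ha : w a ≤ B) (hC : 0 ≤ C)
    (hgap : B ^ r + C * (b - a) < M ^ r)
    (hderiv : ∀ x ∈ Ioo a b, B < w x → w x < M → deriv (fun s => w s ^ r) x ≤ C) :
    ∀ x ∈ Icc a b, w x < M := by
  intro x hx
  have hg := image_lt_of_deriv_le_between (f := fun s => w s ^ r)
    (hw.rpow_const fun _ _ => Or.inr hr.le)
    (hw'.rpow_const fun x hx => Or.inl (hw0 x (Ioo_subset_Icc_self hx)).ne')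
    (Real.rpow_le_rpow (hw0 a ⟨le_rfl, hx.1.trans hx.2⟩).le ha hr.le) hC hgap
    (fun x hx hband => hderiv x hx
      ((Real.rpow_lt_rpow_iff hB (hw0 x (Ioo_subset_Icc_self hx)).le hr).1 hband.1)
      ((Real.rpow_lt_rpow_iff (hw0 x (Ioo_subset_Icc_self hx)).le hM hr).1 hband.2))
  exact (Real.rpow_lt_rpow_iff (hw0 x hx).le hM hr).1 (hg x hx)

theorem gam_pos {k : ℕ} (hk : 3 ≤ k) : 0 < gam k := by
  have : (3 : ℝ) ≤ k := by exact_mod_cast hk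
  rw [gam, sub_pos, div_lt_div_iff₀ (by positivity) (by positivity)]
  linarith

theorem half_mul_exp_mu_rpow {k : ℕ} (hk : k ≠ 0) (τ : ℝ) :
    ((1 / 2) * Real.exp (mu k * τ)) ^ ((1 : ℝ) / k) =
      (1 / 2 : ℝ) ^ ((1 : ℝ) / k) * Real.exp (gam k * τ) := by
  rw [Real.mul_rpow (by norm_num) (Real.exp_pos _).le, ← Real.exp_mul, mu, gam]
  congr 2
  field_simp

theorem tendsto_const_mul_exp_mul_atTop {a c : ℝ} (ha : 0 < a) (hc : 0 < c) :
    Tendsto (fun τ => c * Real.exp (a * τ)) atTop atTop :=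
  (Real.tendsto_exp_comp_atTop.2 (tendsto_id.const_mul_atTop ha)).const_mul_atTop hc

theorem stmt13_general (k : ℕ) (hk : 3 ≤ k) (Ap B P : ℝ)
    (hAp : 0 < Ap) :
    ∃ δ₁ τ₈ : ℝ, 0 < δ₁ ∧
      ∀ Am : ℝ, 0 < Am →
      ∀ τ : ℝ, τ₈ ≤ τ →
      ∀ w : ℝ → ℝ,
        (∀ σ ∈ Set.Icc (2*P/5) (δ₁ * Real.exp (gam k * τ)), 0 < w σ) →
        ContDiffOn ℝ 1 w (Set.Icc (2*P/5) (δ₁ * Real.exp (gam k * τ))) →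
        (∃ σ₀ ∈ Set.Ioo (2*P/5) (3*P/5), w σ₀ = B) →
        (∀ σ ∈ Set.Ioc (3*P/5) (δ₁ * Real.exp (gam k * τ)), B < w σ) →
        (∀ σ ∈ Set.Icc (2*P/5) (δ₁ * Real.exp (gam k * τ)),
          B ≤ w σ → w σ ≤ (1/2) * Real.exp (mu k * τ) →
          Real.sqrt Am / (k:ℝ) ≤ deriv (fun s => w s ^ ((1:ℝ)/(k:ℝ))) σ ∧
          deriv (fun s => w s ^ ((1:ℝ)/(k:ℝ))) σ ≤ Real.sqrt Ap / (k:ℝ)) →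
        ∀ σ ∈ Set.Icc (3*P/5) (δ₁ * Real.exp (gam k * τ)),
          B ≤ w σ ∧ w σ ≤ (1/2) * Real.exp (mu k * τ) ∧
          Real.sqrt Am / (k:ℝ) ≤ deriv (fun s => w s ^ ((1:ℝ)/(k:ℝ))) σ ∧
          deriv (fun s => w s ^ ((1:ℝ)/(k:ℝ))) σ ≤ Real.sqrt Ap / (k:ℝ) := by
  set q : ℝ := (1 / 2 : ℝ) ^ ((1 : ℝ) / k)
  have hq : 0 < q := by positivity
  set δ₁ : ℝ := q * k / (2 * Real.sqrt Ap)
  have hδ₁ : 0 < δ₁ := by positivity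
  obtain ⟨τ₈, hτ₈⟩ := eventually_atTop.1
    (((tendsto_const_mul_exp_mul_atTop (gam_pos hk) hδ₁).eventually_gt_atTop (3 * P / 5)).and
      ((tendsto_const_mul_exp_mul_atTop (gam_pos hk) hq).eventually_gt_atTop
        (2 * B ^ ((1 : ℝ) / k))))
  refine ⟨δ₁, τ₈, hδ₁, fun Am _ τ hτ w hpos hw ⟨σ₀, ⟨hσ₀l, hσ₀r⟩, hwσ₀⟩ hgtB hderiv => ?_⟩
  obtain ⟨hPE, hBq⟩ := hτ₈ τ hτ
  set E := δ₁ * Real.exp (gam k * τ)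
  have hσ₀E : Icc σ₀ E ⊆ Icc (2 * P / 5) E := Icc_subset_Icc_left hσ₀l.le
  have h35E : Icc (3 * P / 5) E ⊆ Icc σ₀ E := Icc_subset_Icc_left hσ₀r.le
  have hlow : ∀ σ ∈ Icc (3 * P / 5) E, B ≤ w σ :=
    (hw.continuousOn.mono (h35E.trans hσ₀E)).le_of_forall_lt_on_Ioc hPE hgtB
  have hgap : B ^ ((1 : ℝ) / k) + Real.sqrt Ap / k * (E - σ₀) <
      ((1 / 2) * Real.exp (mu k * τ)) ^ ((1 : ℝ) / k) := by
    have hclimb : Real.sqrt Ap / k * E = q * Real.exp (gam k * τ) / 2 := by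
      simp only [E, δ₁]; field_simp
    have : 0 ≤ Real.sqrt Ap / k * σ₀ := mul_nonneg (by positivity) (by linarith)
    rw [half_mul_exp_mu_rpow (by omega)]
    linarith [mul_sub (Real.sqrt Ap / k) E σ₀]
  have hB : 0 ≤ B := hwσ₀ ▸ (hpos σ₀ (hσ₀E ⟨le_rfl, by linarith⟩)).le
  have hup : ∀ σ ∈ Icc σ₀ E, w σ < (1 / 2) * Real.exp (mu k * τ) :=
    rpow_lt_of_deriv_rpow_le (by positivity) hB (by positivity) (fun x hx => hpos x (hσ₀E hx))
      (hw.continuousOn.mono hσ₀E)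
      ((hw.differentiableOn one_ne_zero).mono (Ioo_subset_Icc_self.trans hσ₀E)) hwσ₀.le
      (by positivity) hgap
      fun x hx hBx hxM => (hderiv x (hσ₀E (Ioo_subset_Icc_self hx)) hBx.le hxM.le).2
  intro σ hσ
  have hwM := (hup σ (h35E hσ)).le
  exact ⟨hlow σ hσ, hwM, hderiv σ (hσ₀E (h35E hσ)) (hlow σ hσ) hwM⟩

/-- extension of the interface derivative estimate to the whole
range `3P/5 ≤ σ ≤ δ₁ e^{γ_k τ}`. Here `w` plays the role of `e^{μ_k τ}|v(·,τ)|`,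
and `δ₁, τ₈` depend only on `k, A⁺, B, P` (in particular not on `A⁻`, `τ`, `w`). -/
theorem stmt13 (k : ℕ) (hk : 3 ≤ k) (Ap B P : ℝ)
    (hAp : 0 < Ap) (hB : 0 < B) (hP : 0 < P) :
    ∃ δ₁ τ₈ : ℝ, 0 < δ₁ ∧
      ∀ Am : ℝ, 0 < Am →
      ∀ τ : ℝ, τ₈ ≤ τ →
      ∀ w : ℝ → ℝ,
        (∀ σ ∈ Set.Icc (2*P/5) (δ₁ * Real.exp (gam k * τ)), 0 < w σ) →
        ContDiffOn ℝ 1 w (Set.Icc (2*P/5) (δ₁ * Real.exp (gam k * τ))) →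
        (∃ σ₀ ∈ Set.Ioo (2*P/5) (3*P/5), w σ₀ = B) →
        (∀ σ ∈ Set.Ioc (3*P/5) (δ₁ * Real.exp (gam k * τ)), B < w σ) →
        (∀ σ ∈ Set.Icc (2*P/5) (δ₁ * Real.exp (gam k * τ)),
          B ≤ w σ → w σ ≤ (1/2) * Real.exp (mu k * τ) →
          Real.sqrt Am / (k:ℝ) ≤ deriv (fun s => w s ^ ((1:ℝ)/(k:ℝ))) σ ∧
          deriv (fun s => w s ^ ((1:ℝ)/(k:ℝ))) σ ≤ Real.sqrt Ap / (k:ℝ)) →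
        ∀ σ ∈ Set.Icc (3*P/5) (δ₁ * Real.exp (gam k * τ)),
          B ≤ w σ ∧ w σ ≤ (1/2) * Real.exp (mu k * τ) ∧
          Real.sqrt Am / (k:ℝ) ≤ deriv (fun s => w s ^ ((1:ℝ)/(k:ℝ))) σ ∧
          deriv (fun s => w s ^ ((1:ℝ)/(k:ℝ))) σ ≤ Real.sqrt Ap / (k:ℝ) :=
  stmt13_general k hk Ap B P hAp
end
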